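/- arXiv:1604.08737 — 2 statements merged into one kernel-verified Lean document; each statement's English description precedes it below -/
import Mathlib

section
/- Let (Σ,μ) be a σ-finite measure space, ω ∈ ℝ, and let A be an operator on L¹(Σ,μ) such that A + ωI is accretive in L¹(Σ,μ) and has a complete resolvent, i.e., for every (u,v) ∈ A, every λ > 0 and every j ∈ J₀: ∫_Σ j(u) dμ ≤ ∫_Σ j(u + λ(ωu + v)) dμ (integrals in [0,∞]). Let Ā denote the closure of A in L¹(Σ,μ) × L¹(Σ,μ). Then Ā + ωI is accretive in L¹(Σ,μ) and has a complete resolvent. Moreover, if (Σ,μ) is a finite measure space and A is accretive in L¹(Σ,μ) with a c-complete resolvent, i.e., for every (u,v) ∈ A, λ > 0 and every j ∈ J: ∫_Σ j(u) dμ ≤ ∫_Σ j(u + λv) dμ, then Ā is accretive in L¹(Σ,μ) with a c-complete resolvent. -/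
open MeasureTheory Filter ENNReal Topology

set_option maxHeartbeats 1000000
set_option synthInstance.maxHeartbeats 400000

namespace Statement13

/-- The class `J₀` of convex, lower semicontinuous `j : ℝ → [0,∞]` with `j(0) = 0`. -/
def MemJzero (j : ℝ → ℝ≥0∞) : Prop :=
  LowerSemicontinuous j ∧ j 0 = 0 ∧
    ∀ a b t : ℝ, 0 ≤ t → t ≤ 1 →
      j ((1 - t) * a + t * b) ≤ ENNReal.ofReal (1 - t) * j a + ENNReal.ofReal t * j b

/-- The class `J` of all convex, lower semicontinuous `j : ℝ → [0,∞]`. -/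
def MemJ (j : ℝ → ℝ≥0∞) : Prop :=
  LowerSemicontinuous j ∧
    ∀ a b t : ℝ, 0 ≤ t → t ≤ 1 →
      j ((1 - t) * a + t * b) ≤ ENNReal.ofReal (1 - t) * j a + ENNReal.ofReal t * j b

variable {α : Type*} [MeasurableSpace α]

/-- `A + ωI` is accretive in `L¹(Σ,μ)`. -/
def AccretiveShift (μ : Measure α) (ω : ℝ) (A : Set (Lp ℝ 1 μ × Lp ℝ 1 μ)) : Prop :=
  ∀ uv ∈ A, ∀ uv' ∈ A, ∀ l : ℝ, 0 ≤ l →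
    eLpNorm (⇑(uv.1 - uv'.1)) 1 μ ≤
      eLpNorm (⇑(uv.1 - uv'.1 + l • ((uv.2 + ω • uv.1) - (uv'.2 + ω • uv'.1)))) 1 μ

/-- `A + ωI` has a complete resolvent:
`∫ j(u) dμ ≤ ∫ j(u + λ(ωu + v)) dμ` for `(u,v) ∈ A`, `λ > 0`, `j ∈ J₀`. -/
def CompleteResolventShift (μ : Measure α) (ω : ℝ)
    (A : Set (Lp ℝ 1 μ × Lp ℝ 1 μ)) : Prop :=
  ∀ uv ∈ A, ∀ l : ℝ, 0 < l → ∀ j : ℝ → ℝ≥0∞, MemJzero j →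
    ∫⁻ x, j (uv.1 x) ∂μ ≤ ∫⁻ x, j (uv.1 x + l * (ω * uv.1 x + uv.2 x)) ∂μ

/-- `A` has a `c`-complete resolvent:
`∫ j(u) dμ ≤ ∫ j(u + λ v) dμ` for `(u,v) ∈ A`, `λ > 0`, `j ∈ J`. -/
def CCompleteResolvent (μ : Measure α) (A : Set (Lp ℝ 1 μ × Lp ℝ 1 μ)) : Prop :=
  ∀ uv ∈ A, ∀ l : ℝ, 0 < l → ∀ j : ℝ → ℝ≥0∞, MemJ j →
    ∫⁻ x, j (uv.1 x) ∂μ ≤ ∫⁻ x, j (uv.1 x + l * uv.2 x) ∂μ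



/-- Convexity in the `[0,∞]` sense. -/
def Conv (j : ℝ → ℝ≥0∞) : Prop :=
  ∀ a b t : ℝ, 0 ≤ t → t ≤ 1 →
    j ((1 - t) * a + t * b) ≤ ENNReal.ofReal (1 - t) * j a + ENNReal.ofReal t * j b

/-- Yosida / inf-convolution approximation of `j`. -/
noncomputable def yos (j : ℝ → ℝ≥0∞) (k : ℕ) (r : ℝ) : ℝ≥0∞ :=
  ⨅ s : ℝ, j s + ENNReal.ofReal ((k : ℝ) * |r - s|)

lemma yos_le (j : ℝ → ℝ≥0∞) (k : ℕ) (r : ℝ) : yos j k r ≤ j r := by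
  simpa [yos] using iInf_le (fun s : ℝ => j s + ENNReal.ofReal ((k : ℝ) * |r - s|)) r

lemma yos_lip (j : ℝ → ℝ≥0∞) (k : ℕ) (a b : ℝ) :
    yos j k a ≤ yos j k b + ENNReal.ofReal ((k : ℝ) * |a - b|) := by
  simp only [yos]
  rw [iInf_add]
  refine le_iInf fun s => ?_
  refine le_trans (iInf_le _ s) ?_
  rw [add_assoc]
  gcongr
  rw [← ENNReal.ofReal_add (by positivity) (by positivity)]
  apply ENNReal.ofReal_le_ofReal
  rw [← mul_add]
  have h : |a - s| ≤ |a - b| + |b - s| := abs_sub_le a b s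
  have : |a - s| ≤ |b - s| + |a - b| := by linarith
  exact mul_le_mul_of_nonneg_left this (Nat.cast_nonneg k)

lemma yos_mono (j : ℝ → ℝ≥0∞) {k k' : ℕ} (h : k ≤ k') (r : ℝ) :
    yos j k r ≤ yos j k' r := by
  refine iInf_mono fun s => ?_
  gcongr

lemma yos_ne_top {j : ℝ → ℝ≥0∞} {s₀ : ℝ} (h : j s₀ ≠ ⊤) (k : ℕ) (r : ℝ) :
    yos j k r ≠ ⊤ := by
  have hle : yos j k r ≤ j s₀ + ENNReal.ofReal ((k : ℝ) * |r - s₀|) := iInf_le _ s₀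
  exact ne_top_of_le_ne_top (ENNReal.add_ne_top.mpr ⟨h, ENNReal.ofReal_ne_top⟩) hle

lemma yos_zero {j : ℝ → ℝ≥0∞} (h : j 0 = 0) (k : ℕ) : yos j k 0 = 0 :=
  le_antisymm (by simpa [h] using yos_le j k 0) (zero_le)

lemma iSup_yos {j : ℝ → ℝ≥0∞} (hj : LowerSemicontinuous j) (r : ℝ) :
    ⨆ k, yos j k r = j r := by
  refine le_antisymm (iSup_le fun k => yos_le j k r) ?_
  by_contra hlt
  push_neg at hlt
  obtain ⟨c, hc1, hc2⟩ := exists_between hlt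
  have hcne : c ≠ ⊤ := ne_top_of_lt hc2
  have hev := hj r c hc2
  rw [Metric.eventually_nhds_iff] at hev
  obtain ⟨δ, δpos, hδ⟩ := hev
  obtain ⟨k, hk⟩ := exists_nat_ge (c.toReal / δ)
  have hck : c ≤ yos j k r := by
    refine le_iInf fun s => ?_
    rcases lt_or_ge (dist s r) δ with h | h
    · exact le_trans (hδ h).le le_self_add
    · refine le_trans ?_ le_add_self
      rw [← ENNReal.ofReal_toReal hcne]
      apply ENNReal.ofReal_le_ofReal
      rw [div_le_iff₀ δpos] at hk
      have hd : δ ≤ |r - s| := by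
        rw [Real.dist_eq] at h; rw [abs_sub_comm]; exact h
      nlinarith [Nat.cast_nonneg (α := ℝ) k]
  exact absurd ((hck.trans (le_iSup (fun k : ℕ => yos j k r) k)).trans_lt hc1) (lt_irrefl c)

lemma yos_conv {j : ℝ → ℝ≥0∞} (hjc : Conv j) {s₀ : ℝ} (hfin : j s₀ ≠ ⊤) (k : ℕ) :
    Conv (yos j k) := by
  intro a b t ht0 ht1
  apply ENNReal.le_of_forall_pos_le_add
  intro ε hε _
  have ha : yos j k a ≠ ⊤ := yos_ne_top hfin k a
  have hb : yos j k b ≠ ⊤ := yos_ne_top hfin k b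
  have hε' : (ε : ℝ≥0∞) ≠ 0 := by exact_mod_cast hε.ne'
  obtain ⟨s, hs⟩ := iInf_lt_iff.mp
    (show (⨅ s : ℝ, (j s + ENNReal.ofReal ((k : ℝ) * |a - s|))) < yos j k a + ε from
      ENNReal.lt_add_right ha hε')
  obtain ⟨s', hs'⟩ := iInf_lt_iff.mp
    (show (⨅ s : ℝ, (j s + ENNReal.ofReal ((k : ℝ) * |b - s|))) < yos j k b + ε from
      ENNReal.lt_add_right hb hε')
  have habs : |((1 - t) * a + t * b) - ((1 - t) * s + t * s')|
      ≤ (1 - t) * |a - s| + t * |b - s'| := by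
    have heq : ((1 - t) * a + t * b) - ((1 - t) * s + t * s')
        = (1 - t) * (a - s) + t * (b - s') := by ring
    rw [heq]
    refine (abs_add_le _ _).trans ?_
    rw [abs_mul, abs_mul, abs_of_nonneg (by linarith), abs_of_nonneg ht0]
  calc yos j k ((1 - t) * a + t * b)
      ≤ j ((1 - t) * s + t * s')
        + ENNReal.ofReal ((k : ℝ) * |((1 - t) * a + t * b) - ((1 - t) * s + t * s')|) :=
        iInf_le _ _
    _ ≤ (ENNReal.ofReal (1 - t) * j s + ENNReal.ofReal t * j s')
        + (ENNReal.ofReal (1 - t) * ENNReal.ofReal ((k : ℝ) * |a - s|)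
          + ENNReal.ofReal t * ENNReal.ofReal ((k : ℝ) * |b - s'|)) := by
        gcongr
        · exact hjc s s' t ht0 ht1
        · rw [← ENNReal.ofReal_mul (by linarith), ← ENNReal.ofReal_mul ht0,
            ← ENNReal.ofReal_add (mul_nonneg (by linarith) (by positivity))
              (mul_nonneg ht0 (by positivity))]
          apply ENNReal.ofReal_le_ofReal
          calc (k : ℝ) * |((1 - t) * a + t * b) - ((1 - t) * s + t * s')|
              ≤ (k : ℝ) * ((1 - t) * |a - s| + t * |b - s'|) :=
                mul_le_mul_of_nonneg_left habs (Nat.cast_nonneg k)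
            _ = (1 - t) * ((k : ℝ) * |a - s|) + t * ((k : ℝ) * |b - s'|) := by ring
    _ = ENNReal.ofReal (1 - t) * (j s + ENNReal.ofReal ((k : ℝ) * |a - s|))
        + ENNReal.ofReal t * (j s' + ENNReal.ofReal ((k : ℝ) * |b - s'|)) := by ring
    _ ≤ ENNReal.ofReal (1 - t) * (yos j k a + ε) + ENNReal.ofReal t * (yos j k b + ε) :=
        add_le_add (mul_le_mul_right hs.le _) (mul_le_mul_right hs'.le _)
    _ = (ENNReal.ofReal (1 - t) * yos j k a + ENNReal.ofReal t * yos j k b)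
        + (ENNReal.ofReal (1 - t) + ENNReal.ofReal t) * ε := by ring
    _ ≤ (ENNReal.ofReal (1 - t) * yos j k a + ENNReal.ofReal t * yos j k b) + 1 * ε := by
        refine add_le_add_right (mul_le_mul_left ?_ _) _
        rw [← ENNReal.ofReal_add (by linarith) ht0]
        simp
    _ = (ENNReal.ofReal (1 - t) * yos j k a + ENNReal.ofReal t * yos j k b) + ε := by
        rw [one_mul]

lemma yos_continuous {j : ℝ → ℝ≥0∞} {s₀ : ℝ} (hfin : j s₀ ≠ ⊤) (k : ℕ) :
    Continuous (yos j k) := by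
  have hne : ∀ r, yos j k r ≠ ⊤ := yos_ne_top hfin k
  set φ : ℝ → ℝ := fun r => (yos j k r).toReal with hφ
  have hlip : ∀ a b, φ a ≤ φ b + (k : ℝ) * |a - b| := by
    intro a b
    have h := yos_lip j k a b
    have h2 := ENNReal.toReal_mono
      (ENNReal.add_ne_top.mpr ⟨hne b, ENNReal.ofReal_ne_top⟩) h
    rwa [ENNReal.toReal_add (hne b) ENNReal.ofReal_ne_top,
      ENNReal.toReal_ofReal (by positivity)] at h2
  have hcont : Continuous φ := by
    refine (LipschitzWith.of_dist_le_mul (K := (k : NNReal)) (f := φ) ?_).continuous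
    intro a b
    rw [Real.dist_eq, Real.dist_eq]
    have hc : ((k : NNReal) : ℝ) = (k : ℝ) := by simp
    rw [hc, abs_sub_le_iff]
    constructor
    · linarith [hlip a b]
    · have h3 := hlip b a
      rw [abs_sub_comm] at h3
      linarith
  have heq : yos j k = fun r => ENNReal.ofReal (φ r) :=
    funext fun r => (ENNReal.ofReal_toReal (hne r)).symm
  rw [heq]
  exact ENNReal.continuous_ofReal.comp hcont


section Integral

variable {μ : Measure α}

lemma enorm_eq (f : Lp ℝ 1 μ) : eLpNorm (⇑f) 1 μ = ENNReal.ofReal ‖f‖ := by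
  rw [Lp.norm_def, ENNReal.ofReal_toReal (Lp.eLpNorm_ne_top f)]

lemma lint_lip {jk : ℝ → ℝ≥0∞} (hc : Continuous jk) (k : ℕ)
    (hlip : ∀ a b, jk a ≤ jk b + ENNReal.ofReal ((k : ℝ) * |a - b|))
    (f g : Lp ℝ 1 μ) :
    ∫⁻ x, jk (f x) ∂μ ≤ ∫⁻ x, jk (g x) ∂μ + ENNReal.ofReal ((k : ℝ) * ‖f - g‖) := by
  have hg : AEMeasurable (fun x => jk (g x)) μ :=
    hc.measurable.comp_aemeasurable (Lp.aestronglyMeasurable g).aemeasurable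
  have habs : ∫⁻ x, ENNReal.ofReal |f x - g x| ∂μ = ENNReal.ofReal ‖f - g‖ := by
    rw [← enorm_eq (f - g), eLpNorm_one_eq_lintegral_enorm]
    refine lintegral_congr_ae ?_
    filter_upwards [Lp.coeFn_sub f g] with x hx
    rw [hx]
    simp [Real.enorm_eq_ofReal_abs]
  calc ∫⁻ x, jk (f x) ∂μ
      ≤ ∫⁻ x, jk (g x) + ENNReal.ofReal ((k : ℝ) * |f x - g x|) ∂μ :=
        lintegral_mono fun x => hlip _ _
    _ = ∫⁻ x, jk (g x) ∂μ + ∫⁻ x, ENNReal.ofReal ((k : ℝ) * |f x - g x|) ∂μ :=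
        lintegral_add_left' hg _
    _ ≤ ∫⁻ x, jk (g x) ∂μ + ENNReal.ofReal ((k : ℝ) * ‖f - g‖) := by
        gcongr
        have : ∀ x, ENNReal.ofReal ((k : ℝ) * |f x - g x|)
            = ENNReal.ofReal (k : ℝ) * ENNReal.ofReal |f x - g x| := fun x =>
          ENNReal.ofReal_mul (Nat.cast_nonneg k)
        simp only [this]
        rw [lintegral_const_mul' _ _ ENNReal.ofReal_ne_top, habs,
          ← ENNReal.ofReal_mul (Nat.cast_nonneg k)]

lemma key {A : Set (Lp ℝ 1 μ × Lp ℝ 1 μ)}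
    (T : Lp ℝ 1 μ × Lp ℝ 1 μ → Lp ℝ 1 μ) (hT : Continuous T) (Z : Prop)
    (hA : ∀ p ∈ A, ∀ j : ℝ → ℝ≥0∞, LowerSemicontinuous j → Conv j → (Z → j 0 = 0) →
      ∫⁻ x, j (p.1 x) ∂μ ≤ ∫⁻ x, j ((T p) x) ∂μ)
    {p : Lp ℝ 1 μ × Lp ℝ 1 μ} (hp : p ∈ closure A)
    {j : ℝ → ℝ≥0∞} (hjl : LowerSemicontinuous j) (hjc : Conv j) (hj0 : Z → j 0 = 0) :
    ∫⁻ x, j (p.1 x) ∂μ ≤ ∫⁻ x, j ((T p) x) ∂μ := by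
  by_cases hfin : ∃ s₀, j s₀ ≠ ⊤
  case neg =>
    push_neg at hfin
    simp [hfin]
  obtain ⟨s₀, hs₀⟩ := hfin
  obtain ⟨q, hq, hqlim⟩ := mem_closure_iff_seq_limit.mp hp
  have hkey : ∀ k : ℕ, ∫⁻ x, yos j k (p.1 x) ∂μ ≤ ∫⁻ x, j ((T p) x) ∂μ := by
    intro k
    have hcont := yos_continuous hs₀ k
    have hstep : ∀ n, ∫⁻ x, yos j k (p.1 x) ∂μ ≤ ∫⁻ x, yos j k ((T p) x) ∂μ
        + ENNReal.ofReal ((k : ℝ) * ‖p.1 - (q n).1‖)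
        + ENNReal.ofReal ((k : ℝ) * ‖T (q n) - T p‖) := by
      intro n
      calc ∫⁻ x, yos j k (p.1 x) ∂μ
          ≤ ∫⁻ x, yos j k ((q n).1 x) ∂μ + ENNReal.ofReal ((k : ℝ) * ‖p.1 - (q n).1‖) :=
            lint_lip hcont k (yos_lip j k) p.1 (q n).1
        _ ≤ ∫⁻ x, yos j k ((T (q n)) x) ∂μ + ENNReal.ofReal ((k : ℝ) * ‖p.1 - (q n).1‖) :=
            add_le_add_left (hA (q n) (hq n) (yos j k) hcont.lowerSemicontinuous
              (yos_conv hjc hs₀ k) (fun hZ => yos_zero (hj0 hZ) k)) _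
        _ ≤ (∫⁻ x, yos j k ((T p) x) ∂μ + ENNReal.ofReal ((k : ℝ) * ‖T (q n) - T p‖))
              + ENNReal.ofReal ((k : ℝ) * ‖p.1 - (q n).1‖) :=
            add_le_add_left (lint_lip hcont k (yos_lip j k) (T (q n)) (T p)) _
        _ = ∫⁻ x, yos j k ((T p) x) ∂μ + ENNReal.ofReal ((k : ℝ) * ‖p.1 - (q n).1‖)
              + ENNReal.ofReal ((k : ℝ) * ‖T (q n) - T p‖) := by ring
    have hlim : Tendsto (fun n => ‖p.1 - (q n).1‖ + ‖T (q n) - T p‖) atTop (𝓝 0) := by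
      have t1 : Tendsto (fun n => (q n).1) atTop (𝓝 p.1) :=
        (continuous_fst.tendsto p).comp hqlim
      have t2 : Tendsto (fun n => T (q n)) atTop (𝓝 (T p)) := (hT.tendsto p).comp hqlim
      rw [tendsto_iff_norm_sub_tendsto_zero] at t1 t2
      have t1' : Tendsto (fun n => ‖p.1 - (q n).1‖) atTop (𝓝 0) := by
        simpa [norm_sub_rev] using t1
      simpa using t1'.add t2
    apply ENNReal.le_of_forall_pos_le_add
    intro ε hε _
    have hεR : (0 : ℝ) < ε := hε
    have hmul : Tendsto (fun n => (k : ℝ) * (‖p.1 - (q n).1‖ + ‖T (q n) - T p‖))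
        atTop (𝓝 0) := by
      simpa using hlim.const_mul (k : ℝ)
    obtain ⟨n, hn⟩ := (hmul.eventually_lt_const hεR).exists
    calc ∫⁻ x, yos j k (p.1 x) ∂μ
        ≤ ∫⁻ x, yos j k ((T p) x) ∂μ
          + ENNReal.ofReal ((k : ℝ) * ‖p.1 - (q n).1‖)
          + ENNReal.ofReal ((k : ℝ) * ‖T (q n) - T p‖) := hstep n
      _ ≤ ∫⁻ x, j ((T p) x) ∂μ
          + ENNReal.ofReal ((k : ℝ) * ‖p.1 - (q n).1‖)
          + ENNReal.ofReal ((k : ℝ) * ‖T (q n) - T p‖) :=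
          add_le_add_left (add_le_add_left
            (lintegral_mono fun x => yos_le j k ((T p) x)) _) _
      _ = ∫⁻ x, j ((T p) x) ∂μ
          + (ENNReal.ofReal ((k : ℝ) * ‖p.1 - (q n).1‖)
            + ENNReal.ofReal ((k : ℝ) * ‖T (q n) - T p‖)) := by ring
      _ ≤ ∫⁻ x, j ((T p) x) ∂μ + (ε : ℝ≥0∞) := by
          refine add_le_add_right ?_ _
          rw [← ENNReal.ofReal_add (by positivity) (by positivity), ← ENNReal.ofReal_coe_nnreal]
          apply ENNReal.ofReal_le_ofReal
          rw [← mul_add]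
          exact hn.le
  have hmeas : ∀ k : ℕ, AEMeasurable (fun x => yos j k (p.1 x)) μ := fun k =>
    (yos_continuous hs₀ k).measurable.comp_aemeasurable
      (Lp.aestronglyMeasurable p.1).aemeasurable
  have hrw : ∫⁻ x, j (p.1 x) ∂μ = ⨆ k, ∫⁻ x, yos j k (p.1 x) ∂μ := by
    rw [← lintegral_iSup' hmeas (Filter.Eventually.of_forall fun x k k' hk => yos_mono j hk _)]
    exact lintegral_congr fun x => (iSup_yos hjl _).symm
  rw [hrw]
  exact iSup_le hkey

end Integral


section Closure

variable {μ : Measure α}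

lemma acc_closure (ω : ℝ) {A : Set (Lp ℝ 1 μ × Lp ℝ 1 μ)}
    (h : AccretiveShift μ ω A) : AccretiveShift μ ω (closure A) := by
  intro p hp q hq l hl
  have hmem : (p, q) ∈ closure (A ×ˢ A) := by
    rw [closure_prod_eq]; exact ⟨hp, hq⟩
  set S : Set ((Lp ℝ 1 μ × Lp ℝ 1 μ) × (Lp ℝ 1 μ × Lp ℝ 1 μ)) :=
    {x | ‖x.1.1 - x.2.1‖ ≤ ‖x.1.1 - x.2.1 + l • ((x.1.2 + ω • x.1.1) - (x.2.2 + ω • x.2.1))‖}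
    with hS_def
  have hS : IsClosed S := isClosed_le (by fun_prop) (by fun_prop)
  have hsub : A ×ˢ A ⊆ S := by
    rintro ⟨a, b⟩ ⟨ha, hb⟩
    have hab := h a ha b hb l hl
    rw [enorm_eq, enorm_eq] at hab
    exact (ENNReal.ofReal_le_ofReal_iff (norm_nonneg _)).mp hab
  have hfinal : (p, q) ∈ S := closure_minimal hsub hS hmem
  rw [enorm_eq, enorm_eq]
  exact ENNReal.ofReal_le_ofReal hfinal

lemma integ_shift (j : ℝ → ℝ≥0∞) (l ω : ℝ) (q : Lp ℝ 1 μ × Lp ℝ 1 μ) :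
    ∫⁻ x, j (q.1 x + l * (ω * q.1 x + q.2 x)) ∂μ
      = ∫⁻ x, j ((q.1 + l • (ω • q.1 + q.2) : Lp ℝ 1 μ) x) ∂μ := by
  refine lintegral_congr_ae ?_
  filter_upwards [Lp.coeFn_add q.1 (l • (ω • q.1 + q.2)), Lp.coeFn_smul l (ω • q.1 + q.2),
    Lp.coeFn_add (ω • q.1) q.2, Lp.coeFn_smul ω q.1] with x h1 h2 h3 h4
  simp only [Pi.add_apply, Pi.smul_apply, smul_eq_mul] at h1 h2 h3 h4
  rw [h1, h2, h3, h4]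

lemma integ_c (j : ℝ → ℝ≥0∞) (l : ℝ) (q : Lp ℝ 1 μ × Lp ℝ 1 μ) :
    ∫⁻ x, j (q.1 x + l * q.2 x) ∂μ
      = ∫⁻ x, j ((q.1 + l • q.2 : Lp ℝ 1 μ) x) ∂μ := by
  refine lintegral_congr_ae ?_
  filter_upwards [Lp.coeFn_add q.1 (l • q.2), Lp.coeFn_smul l q.2] with x h1 h2
  simp only [Pi.add_apply, Pi.smul_apply, smul_eq_mul] at h1 h2
  rw [h1, h2]

end Closure

/-- **The closure of an accretive operator in `L¹` with (`c`-)complete resolvent is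
accretive with (`c`-)complete resolvent.** -/
theorem closure_preserves_complete_resolvent
    (μ : Measure α) [SigmaFinite μ] (ω : ℝ) (A : Set (Lp ℝ 1 μ × Lp ℝ 1 μ)) :
    ((AccretiveShift μ ω A ∧ CompleteResolventShift μ ω A) →
      AccretiveShift μ ω (closure A) ∧ CompleteResolventShift μ ω (closure A)) ∧
    (IsFiniteMeasure μ →
      (AccretiveShift μ 0 A ∧ CCompleteResolvent μ A) →
      AccretiveShift μ 0 (closure A) ∧ CCompleteResolvent μ (closure A)) := by
  constructor
  · rintro ⟨hacc, hres⟩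
    refine ⟨acc_closure ω hacc, ?_⟩
    intro p hp l hl j hj
    obtain ⟨hjl, hj0, hjc⟩ := hj
    rw [integ_shift j l ω p]
    exact key (fun q => q.1 + l • (ω • q.1 + q.2)) (by fun_prop) True
      (fun q hq j' h1 h2 h3 => by
        have h := hres q hq l hl j' ⟨h1, h3 trivial, h2⟩
        rwa [integ_shift j' l ω q] at h)
      hp hjl hjc (fun _ => hj0)
  · rintro _ ⟨hacc, hres⟩
    refine ⟨acc_closure 0 hacc, ?_⟩
    intro p hp l hl j hj
    obtain ⟨hjl, hjc⟩ := hj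
    rw [integ_c j l p]
    exact key (fun q => q.1 + l • q.2) (by fun_prop) False
      (fun q hq j' h1 h2 _ => by
        have h := hres q hq l hl j' ⟨h1, h2⟩
        rwa [integ_c j' l q] at h)
      hp hjl hjc (fun h => h.elim)


end Statement13
end

section
/- Let 1 ≤ q₀ < ∞, ω ∈ ℝ, and let A be an operator on L^{q₀}(Σ,μ) such that A + ωI is completely accretive, i.e., for all (u,v),(û,v̂) ∈ A, every λ > 0 and every j ∈ J₀: ∫_Σ j(u − û) dμ ≤ ∫_Σ j((u − û) + λ(ω(u − û) + (v − v̂))) dμ (integrals in [0,∞]). Then for every λ > 0 with λω < 1, all (u,v),(û,v̂) ∈ A and every 1 ≤ q̃ ≤ ∞, one has ‖u − û‖_{q̃} ≤ (1 − λω)^{−1}·‖(u − û) + λ(v − v̂)‖_{q̃}, where both sides are taken in [0,∞]. (Equivalently: the resolvent J_λ of A is Lipschitz with constant (1−λω)^{−1} with respect to every L^{q̃}-norm, 1 ≤ q̃ ≤ ∞.) -/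
open MeasureTheory Filter ENNReal

namespace Statement14

/-- The class `J₀` of convex, lower semicontinuous `j : ℝ → [0,∞]` with `j(0) = 0`. -/
def MemJzero (j : ℝ → ℝ≥0∞) : Prop :=
  LowerSemicontinuous j ∧ j 0 = 0 ∧
    ∀ a b t : ℝ, 0 ≤ t → t ≤ 1 →
      j ((1 - t) * a + t * b) ≤ ENNReal.ofReal (1 - t) * j a + ENNReal.ofReal t * j b

lemma abs_rpow_convex {p : ℝ} (hp : 1 ≤ p) (a b t : ℝ) (ht0 : 0 ≤ t) (ht1 : t ≤ 1) :
    |(1 - t) * a + t * b| ^ p ≤ (1 - t) * |a| ^ p + t * |b| ^ p := by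
  have h1 : |(1 - t) * a + t * b| ≤ (1 - t) * |a| + t * |b| := by
    calc |(1 - t) * a + t * b| ≤ |(1 - t) * a| + |t * b| := abs_add_le _ _
    _ = (1 - t) * |a| + t * |b| := by
        rw [abs_mul, abs_mul, abs_of_nonneg (by linarith : (0:ℝ) ≤ 1 - t), abs_of_nonneg ht0]
  have h2 : ((1 - t) * |a| + t * |b|) ^ p ≤ (1 - t) * |a| ^ p + t * |b| ^ p := by
    have := (convexOn_rpow hp).2 (Set.mem_Ici.2 (abs_nonneg a)) (Set.mem_Ici.2 (abs_nonneg b))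
      (by linarith : (0:ℝ) ≤ 1 - t) ht0 (by ring)
    simpa using this
  calc |(1 - t) * a + t * b| ^ p ≤ ((1 - t) * |a| + t * |b|) ^ p :=
        Real.rpow_le_rpow (abs_nonneg _) h1 (by linarith)
  _ ≤ _ := h2

lemma memJzero_rpow {p : ℝ} (hp : 1 ≤ p) :
    MemJzero (fun r => ENNReal.ofReal (|r| ^ p)) := by
  refine ⟨?_, by simp [Real.zero_rpow (by linarith : p ≠ 0)], ?_⟩
  · refine Continuous.lowerSemicontinuous ?_
    exact ENNReal.continuous_ofReal.comp
      (continuous_abs.rpow_const fun x => Or.inr (by linarith))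
  · intro a b t ht0 ht1
    rw [← ENNReal.ofReal_mul (by linarith), ← ENNReal.ofReal_mul ht0,
      ← ENNReal.ofReal_add (mul_nonneg (by linarith) (by positivity)) (mul_nonneg ht0 (by positivity))]
    exact ENNReal.ofReal_le_ofReal (abs_rpow_convex hp a b t ht0 ht1)

lemma memJzero_indicator {M : ℝ} (hM : 0 ≤ M) :
    MemJzero (fun r => if |r| ≤ M then 0 else ∞) := by
  refine ⟨?_, by simp [hM], ?_⟩
  · intro x y hy
    by_cases hx : |x| ≤ M
    · simp [hx] at hy
    · have h : ∀ᶠ x' in nhds x, M < |x'| :=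
        (continuous_abs.continuousAt).eventually_const_lt (not_le.1 hx)
      filter_upwards [h] with x' hx'
      simp only [not_le.2 hx', if_neg (not_le.2 hx')]
      simpa [hx] using hy
  · intro a b t ht0 ht1
    rcases eq_or_lt_of_le ht0 with h0 | h0
    · simp [← h0]
    rcases eq_or_lt_of_le ht1 with h1 | h1
    · simp [h1]
    by_cases ha : |a| ≤ M
    · by_cases hb : |b| ≤ M
      · have : |(1 - t) * a + t * b| ≤ M := by
          calc |(1 - t) * a + t * b| ≤ (1 - t) * |a| + t * |b| := by
                calc _ ≤ |(1 - t) * a| + |t * b| := abs_add_le _ _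
                _ = _ := by rw [abs_mul, abs_mul,
                    abs_of_nonneg (by linarith : (0:ℝ) ≤ 1 - t), abs_of_nonneg ht0]
          _ ≤ (1 - t) * M + t * M := by
                gcongr <;> linarith
          _ = M := by ring
        simp [this]
      · have : ENNReal.ofReal t * (if |b| ≤ M then (0:ℝ≥0∞) else ∞) = ∞ := by
          simp [hb, ENNReal.mul_top, (ENNReal.ofReal_pos.2 h0).ne']
        rw [this]; simp
    · have : ENNReal.ofReal (1 - t) * (if |a| ≤ M then (0:ℝ≥0∞) else ∞) = ∞ := by
        simp [ha, ENNReal.mul_top, (ENNReal.ofReal_pos.2 (by linarith : (0:ℝ) < 1 - t)).ne']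
      rw [this]; simp

/-- **Resolvents of quasi completely accretive operators are Lipschitz in every
`L^{q̃}`-norm.**  If `A + ωI` is completely accretive in `L^{q₀}(Σ,μ)`, then for every
`λ > 0` with `λω < 1`, all `(u,v), (û,v̂) ∈ A` and every `1 ≤ q̃ ≤ ∞` one has
`‖u − û‖_{q̃} ≤ (1 − λω)⁻¹ ‖(u − û) + λ(v − v̂)‖_{q̃}` in `[0,∞]`. -/
theorem completely_accretive_resolvent_lipschitz
    {α : Type*} [MeasurableSpace α] (μ : Measure α) [SigmaFinite μ]
    (q₀ : ℝ) (hq₀ : 1 ≤ q₀) (ω : ℝ)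
    (A : Set (Lp ℝ (ENNReal.ofReal q₀) μ × Lp ℝ (ENNReal.ofReal q₀) μ))
    (hA : ∀ uv ∈ A, ∀ uv' ∈ A, ∀ l : ℝ, 0 < l → ∀ j : ℝ → ℝ≥0∞, MemJzero j →
      ∫⁻ x, j ((uv.1 - uv'.1) x) ∂μ ≤
        ∫⁻ x, j ((uv.1 - uv'.1) x +
          l * (ω * (uv.1 - uv'.1) x + (uv.2 - uv'.2) x)) ∂μ) :
    ∀ l : ℝ, 0 < l → l * ω < 1 → ∀ uv ∈ A, ∀ uv' ∈ A, ∀ q' : ℝ≥0∞, 1 ≤ q' →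
      eLpNorm (⇑(uv.1 - uv'.1)) q' μ ≤
        ENNReal.ofReal ((1 - l * ω)⁻¹) *
          eLpNorm (⇑(uv.1 - uv'.1 + l • (uv.2 - uv'.2))) q' μ := by

  intro l hl hlω uv huv uv' huv' q' hq'
  have hc : (0:ℝ) < 1 - l * ω := by linarith
  set c : ℝ := (1 - l * ω)⁻¹ with hcdef
  have hcpos : 0 < c := inv_pos.2 hc
  set f : α → ℝ := ⇑(uv.1 - uv'.1) with hf
  set g : α → ℝ := ⇑(uv.2 - uv'.2) with hg
  have hkey : ∀ x, f x + (l * c) * (ω * f x + g x) = c * (f x + l * g x) := by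
    intro x
    rw [hcdef]
    field_simp
    ring
  have hcoe : (⇑(uv.1 - uv'.1 + l • (uv.2 - uv'.2)) : α → ℝ) =ᵐ[μ]
      fun x => f x + l * g x := by
    filter_upwards [Lp.coeFn_add (uv.1 - uv'.1) (l • (uv.2 - uv'.2)),
      Lp.coeFn_smul l (uv.2 - uv'.2)] with x h1 h2
    simp only [Pi.add_apply] at h1
    rw [h1, h2, Pi.smul_apply, smul_eq_mul]
  rw [eLpNorm_congr_ae hcoe]
  set G : α → ℝ := fun x => f x + l * g x with hG
  have hAj : ∀ j : ℝ → ℝ≥0∞, MemJzero j →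
      ∫⁻ x, j (f x) ∂μ ≤ ∫⁻ x, j (c * G x) ∂μ := by
    intro j hj
    refine (hA uv huv uv' huv' (l * c) (mul_pos hl hcpos) j hj).trans_eq ?_
    exact lintegral_congr fun x => by rw [hkey x]
  by_cases hq'top : q' = ∞
  · rw [hq'top]
    by_cases hGtop : eLpNorm G ∞ μ = ∞
    · rw [hGtop, ENNReal.mul_top (by simpa using (ENNReal.ofReal_pos.2 hcpos).ne')]
      exact le_top
    · set M := (eLpNorm G ∞ μ).toReal with hM
      have hM0 : 0 ≤ M := ENNReal.toReal_nonneg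
      have hGle : ∀ᵐ x ∂μ, |G x| ≤ M := by
        filter_upwards [ae_le_eLpNormEssSup (f := G) (μ := μ)] with x hx
        have h2 : (‖G x‖₊ : ℝ≥0∞) ≤ eLpNorm G ∞ μ := by rwa [eLpNorm_exponent_top]
        have := ENNReal.toReal_mono hGtop h2
        rw [hM, eLpNorm_exponent_top]
        simpa [Real.norm_eq_abs] using this
      have h1 := hAj _ (memJzero_indicator (M := c * M) (mul_nonneg hcpos.le hM0))
      have h2 : ∫⁻ x, (if |c * G x| ≤ c * M then (0:ℝ≥0∞) else ∞) ∂μ = 0 := by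
        have hz : (fun x => if |c * G x| ≤ c * M then (0:ℝ≥0∞) else ∞) =ᵐ[μ] 0 := by
          filter_upwards [hGle] with x hx
          have : |c * G x| ≤ c * M := by
            rw [abs_mul, abs_of_pos hcpos]
            exact mul_le_mul_of_nonneg_left hx hcpos.le
          simp only [if_pos this, Pi.zero_apply]
        exact (lintegral_congr_ae hz).trans lintegral_zero
      rw [h2] at h1
      have h1' : ∫⁻ x, (if |f x| ≤ c * M then (0:ℝ≥0∞) else ∞) ∂μ = 0 :=
        le_antisymm h1 zero_le
      have hmeasf : Measurable f := (Lp.stronglyMeasurable (uv.1 - uv'.1)).measurable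
      have hjm : Measurable (fun x => if |f x| ≤ c * M then (0:ℝ≥0∞) else ∞) :=
        Measurable.ite (measurableSet_le hmeasf.abs measurable_const)
          measurable_const measurable_const
      have hfle : ∀ᵐ x ∂μ, |f x| ≤ c * M := by
        filter_upwards [(lintegral_eq_zero_iff hjm).1 h1'] with x hx
        by_contra h
        simp [h] at hx
      calc eLpNorm f ∞ μ ≤ ENNReal.ofReal (c * M) := by
            rw [eLpNorm_exponent_top]
            exact eLpNormEssSup_le_of_ae_bound
              (by filter_upwards [hfle] with x hx; rwa [Real.norm_eq_abs])
      _ = ENNReal.ofReal c * eLpNorm G ∞ μ := by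
            rw [ENNReal.ofReal_mul hcpos.le, hM, ENNReal.ofReal_toReal hGtop]
  · have hq0 : q' ≠ 0 := (lt_of_lt_of_le zero_lt_one hq').ne'
    set p := q'.toReal with hp
    have hp1 : 1 ≤ p := by
      rw [hp, ← ENNReal.toReal_one]
      exact ENNReal.toReal_mono hq'top hq'
    have hp0 : 0 < p := by linarith
    have hjf : ∀ h : α → ℝ, ∫⁻ x, ENNReal.ofReal (|h x| ^ p) ∂μ
        = ∫⁻ x, (‖h x‖₊ : ℝ≥0∞) ^ p ∂μ := by
      intro h
      refine lintegral_congr fun x => ?_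
      rw [← enorm_eq_nnnorm, Real.enorm_eq_ofReal_abs, ENNReal.ofReal_rpow_of_nonneg (abs_nonneg _) hp0.le]
    have h1 := hAj _ (memJzero_rpow hp1)
    have h2 : ∫⁻ x, ENNReal.ofReal (|c * G x| ^ p) ∂μ
        = ENNReal.ofReal (c ^ p) * ∫⁻ x, ENNReal.ofReal (|G x| ^ p) ∂μ := by
      rw [← lintegral_const_mul' _ _ ENNReal.ofReal_ne_top]
      refine lintegral_congr fun x => ?_
      rw [abs_mul, abs_of_pos hcpos, Real.mul_rpow hcpos.le (abs_nonneg _),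
        ENNReal.ofReal_mul (by positivity)]
    rw [h2, hjf, hjf] at h1
    rw [eLpNorm_eq_lintegral_rpow_enorm_toReal hq0 hq'top,
      eLpNorm_eq_lintegral_rpow_enorm_toReal hq0 hq'top, ← hp]
    calc (∫⁻ x, (‖f x‖₊ : ℝ≥0∞) ^ p ∂μ) ^ (1 / p)
        ≤ (ENNReal.ofReal (c ^ p) * ∫⁻ x, (‖G x‖₊ : ℝ≥0∞) ^ p ∂μ) ^ (1 / p) :=
          ENNReal.rpow_le_rpow h1 (by positivity)
    _ = ENNReal.ofReal c * (∫⁻ x, (‖G x‖₊ : ℝ≥0∞) ^ p ∂μ) ^ (1 / p) := by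
        rw [ENNReal.mul_rpow_of_nonneg _ _ (by positivity),
          ← ENNReal.ofReal_rpow_of_nonneg hcpos.le hp0.le,
          ← ENNReal.rpow_mul, mul_one_div_cancel hp0.ne', ENNReal.rpow_one]


end Statement14
end
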